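/- arXiv:1804.00208 — 6 statements merged into one kernel-verified Lean document; each statement's English description precedes it below -/
import Mathlib

section
/- Let h*(z) = h*_0 + h*_1 z + ... + h*_d z^d be a polynomial of degree s ≤ d, and let l = d+1-s. Then there exist unique polynomials a(z) of degree ≤ d and b(z) of degree ≤ s-1 satisfying the symmetry conditions a(z) = z^d·a(1/z) and b(z) = z^{s-1}·b(1/z) such that (1 + z + ... + z^{l-1})·h*(z) = a(z) + z^l·b(z). Moreover their coefficients are given by a_j = h*_0 + h*_1 + ... + h*_j − h*_d − h*_{d-1} − ... − h*_{d-j+1} and b_j = −h*_0 − h*_1 − ... − h*_j + h*_s + h*_{s-1} + ... + h*_{s-j}. -/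
/-!
Write `T m = h*_0 + ⋯ + h*_{m-1}`. Multiplying by `1 + z + ⋯ + z^{l-1}` turns the coefficient
of `z^k` into the window sum `T (k+1) - T (k+1-l)`. In terms of `T` the claimed coefficients are
`a_j = T (j+1) + T (d+1-j) - T (d+1)` and `b_j = T (s+1) - T (j+1) - T (s-j)`, visibly
palindromic; since `T` is constant from `s+1` on, `a_k + b_{k-l}` equals the window sum for
every `k`.
-/

open Polynomial Finset

theorem Finset.sum_range_sub_reflect {M : Type*} [AddCommGroup M] (f : ℕ → M) {j n : ℕ}
    (hj : j ≤ n + 1) :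
    ∑ i ∈ range j, f (n - i) =
      ∑ i ∈ range (n + 1), f i - ∑ i ∈ range (n + 1 - j), f i := by
  rw [← Nat.Ico_zero_eq_range, sum_Ico_reflect f 0 hj, Nat.sub_zero,
    sum_Ico_eq_sub f (Nat.sub_le _ _)]

theorem Finset.sum_range_eq_of_forall_gt_eq_zero {M : Type*} [AddCommMonoid M] {f : ℕ → M}
    {s m : ℕ} (hf : ∀ j, s < j → f j = 0) (hm : s + 1 ≤ m) :
    ∑ i ∈ range m, f i = ∑ i ∈ range (s + 1), f i :=
  (sum_subset (range_subset_range.mpr hm) fun j _ hj => hf j (by simpa using hj)).symm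

namespace Polynomial

section Semiring

variable {R : Type*} [Semiring R]

theorem coeff_eq_coeff_sub_of_reflect_eq {p : R[X]} {N j : ℕ} (hp : reflect N p = p)
    (hj : j ≤ N) : p.coeff j = p.coeff (N - j) := by
  rw [← revAt_le hj, ← coeff_reflect, hp]

theorem coeff_sum_range_C_mul_X_pow (f : ℕ → R) (n k : ℕ) :
    (∑ j ∈ range n, C (f j) * X ^ j).coeff k = if k < n then f k else 0 := by
  simp

end Semiring

theorem coeff_geomSum_mul {R : Type*} [Ring R] (p : R[X]) (l k : ℕ) :
    ((∑ i ∈ range l, X ^ i) * p).coeff k =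
      ∑ i ∈ range (k + 1), p.coeff i - ∑ i ∈ range (k + 1 - l), p.coeff i := by
  induction l with
  | zero => simp
  | succ l ih =>
    rw [sum_range_succ, add_mul, coeff_add, ih, coeff_X_pow_mul']
    split_ifs with hlk
    · rw [show k + 1 - l = k - l + 1 by omega, sum_range_succ _ (k - l),
        show k + 1 - (l + 1) = k - l by omega]
      abel
    · rw [show k + 1 - l = k + 1 - (l + 1) by omega, add_zero]

end Polynomial

section Stapledon

variable {R : Type*} [Ring R] (d s : ℕ) (h : ℕ → R)

noncomputable def stapledonA : R[X] :=
  ∑ j ∈ range (d + 1), C ((∑ i ∈ range (j + 1), h i) - ∑ i ∈ range j, h (d - i)) * X ^ j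

noncomputable def stapledonB : R[X] :=
  ∑ j ∈ range s,
    C (-(∑ i ∈ range (j + 1), h i) + ∑ i ∈ range (j + 1), h (s - i)) * X ^ j

variable {d s} {j : ℕ}

theorem coeff_stapledonA (hj : j ≤ d) :
    (stapledonA d h).coeff j = (∑ i ∈ range (j + 1), h i) - ∑ i ∈ range j, h (d - i) := by
  rw [stapledonA, coeff_sum_range_C_mul_X_pow, if_pos (Nat.lt_succ_of_le hj)]

theorem coeff_stapledonA_eq_zero_of_lt (hj : d < j) : (stapledonA d h).coeff j = 0 := by
  rw [stapledonA, coeff_sum_range_C_mul_X_pow, if_neg (by omega)]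

theorem coeff_stapledonB (hj : j ≤ s - 1) :
    (stapledonB s h).coeff j =
      -(∑ i ∈ range (j + 1), h i) + ∑ i ∈ range (j + 1), h (s - i) := by
  rw [stapledonB, coeff_sum_range_C_mul_X_pow]
  split_ifs with hjs
  · rfl
  · obtain rfl : j = 0 := by omega
    obtain rfl : s = 0 := by omega
    simp

theorem coeff_stapledonB_eq_zero_of_le (hj : s ≤ j) : (stapledonB s h).coeff j = 0 := by
  rw [stapledonB, coeff_sum_range_C_mul_X_pow, if_neg (by omega)]

theorem coeff_stapledonA_eq_partialSums (hj : j ≤ d) :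
    (stapledonA d h).coeff j = ∑ i ∈ range (j + 1), h i + ∑ i ∈ range (d + 1 - j), h i -
      ∑ i ∈ range (d + 1), h i := by
  rw [coeff_stapledonA h hj, sum_range_sub_reflect h (by omega)]
  abel

theorem coeff_stapledonB_eq_partialSums (hj : j < s) :
    (stapledonB s h).coeff j = ∑ i ∈ range (s + 1), h i - ∑ i ∈ range (j + 1), h i -
      ∑ i ∈ range (s - j), h i := by
  rw [coeff_stapledonB h (by omega), sum_range_sub_reflect h (by omega),
    show s + 1 - (j + 1) = s - j by omega]
  abel

theorem reflect_stapledonA : reflect d (stapledonA d h) = stapledonA d h := by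
  ext j
  rw [coeff_reflect]
  rcases le_or_gt j d with hj | hj
  · rw [revAt_le hj, coeff_stapledonA_eq_partialSums h hj,
      coeff_stapledonA_eq_partialSums h (Nat.sub_le d j),
      show d + 1 - (d - j) = j + 1 by omega, show d - j + 1 = d + 1 - j by omega]
    abel
  · rw [revAt_eq_self_of_lt hj]

theorem reflect_stapledonB : reflect (s - 1) (stapledonB s h) = stapledonB s h := by
  ext j
  rw [coeff_reflect]
  rcases le_or_gt j (s - 1) with hj | hj
  · rcases Nat.eq_zero_or_pos s with rfl | hs
    · simp [stapledonB]
    rw [revAt_le hj, coeff_stapledonB_eq_partialSums h (by omega),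
      coeff_stapledonB_eq_partialSums h (by omega), show s - (s - 1 - j) = j + 1 by omega,
      show s - 1 - j + 1 = s - j by omega]
    abel
  · rw [revAt_eq_self_of_lt hj]

theorem geomSum_mul_eq_stapledonA_add (hsd : s ≤ d) (htop : ∀ j, s < j → h j = 0) :
    (∑ i ∈ range (d + 1 - s), (X : R[X]) ^ i) * (∑ j ∈ range (d + 1), C (h j) * X ^ j) =
      stapledonA d h + X ^ (d + 1 - s) * stapledonB s h := by
  have hcoeff : (∑ j ∈ range (d + 1), C (h j) * X ^ j).coeff = h := by
    funext k
    rw [coeff_sum_range_C_mul_X_pow]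
    split_ifs with hk
    · rfl
    · exact (htop k (by omega)).symm
  have hT {m : ℕ} (hm : s + 1 ≤ m) : ∑ i ∈ range m, h i = ∑ i ∈ range (s + 1), h i :=
    sum_range_eq_of_forall_gt_eq_zero htop hm
  ext k
  rw [coeff_geomSum_mul, hcoeff, coeff_add, coeff_X_pow_mul']
  rcases le_or_gt k d with hkd | hdk
  · rw [coeff_stapledonA_eq_partialSums h hkd, hT (m := d + 1) (by omega)]
    split_ifs with hlk
    · rw [coeff_stapledonB_eq_partialSums h (by omega),
        show s - (k - (d + 1 - s)) = d + 1 - k by omega,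
        show k - (d + 1 - s) + 1 = k + 1 - (d + 1 - s) by omega]
      abel
    · rw [show k + 1 - (d + 1 - s) = 0 by omega, hT (m := d + 1 - k) (by omega)]
      simp
  · rw [coeff_stapledonA_eq_zero_of_lt h hdk, hT (m := k + 1) (by omega),
      hT (m := k + 1 - (d + 1 - s)) (by omega)]
    split_ifs
    · rw [coeff_stapledonB_eq_zero_of_le h (by omega)]
      simp
    · simp

end Stapledon

theorem stmt0_general (d s : ℕ) (hsd : s ≤ d) (h : ℕ → ℤ)
    (htop : ∀ j, s < j → h j = 0) :
    ∃! ab : Polynomial ℤ × Polynomial ℤ,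
      (∀ j, d < j → ab.1.coeff j = 0) ∧
      (∀ j, s - 1 < j → ab.2.coeff j = 0) ∧
      (∀ j ≤ d, ab.1.coeff j = ab.1.coeff (d - j)) ∧
      (∀ j ≤ s - 1, ab.2.coeff j = ab.2.coeff (s - 1 - j)) ∧
      (∑ i ∈ Finset.range (d + 1 - s), (Polynomial.X : Polynomial ℤ) ^ i) *
          (∑ j ∈ Finset.range (d + 1), Polynomial.C (h j) * Polynomial.X ^ j) =
        ab.1 + Polynomial.X ^ (d + 1 - s) * ab.2 ∧
      (∀ j ≤ d, ab.1.coeff j =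
        (∑ i ∈ Finset.range (j + 1), h i) - ∑ i ∈ Finset.range j, h (d - i)) ∧
      (∀ j ≤ s - 1, ab.2.coeff j =
        -(∑ i ∈ Finset.range (j + 1), h i) + ∑ i ∈ Finset.range (j + 1), h (s - i)) := by
  refine ⟨(stapledonA d h, stapledonB s h),
    ⟨fun _ => coeff_stapledonA_eq_zero_of_lt h,
      fun j hj => coeff_stapledonB_eq_zero_of_le h (by omega),
      fun _ => coeff_eq_coeff_sub_of_reflect_eq (reflect_stapledonA h),
      fun _ => coeff_eq_coeff_sub_of_reflect_eq (reflect_stapledonB h),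
      geomSum_mul_eq_stapledonA_add h hsd htop,
      fun _ => coeff_stapledonA h, fun _ => coeff_stapledonB h⟩, ?_⟩
  rintro ⟨a, b⟩ ⟨ha, hb, -, -, -, hac, hbc⟩
  refine Prod.ext (Polynomial.ext fun j => ?_) (Polynomial.ext fun j => ?_)
  · rcases le_or_gt j d with hj | hj
    · rw [hac j hj, coeff_stapledonA h hj]
    · rw [ha j hj, coeff_stapledonA_eq_zero_of_lt h hj]
  · rcases le_or_gt j (s - 1) with hj | hj
    · rw [hbc j hj, coeff_stapledonB h hj]
    · rw [hb j hj, coeff_stapledonB_eq_zero_of_le h (by omega)]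

/-- Stapledon decomposition: algebraic existence, uniqueness, and coefficient formulas. -/
theorem stmt0 (d s : ℕ) (hsd : s ≤ d) (h : ℕ → ℤ) (hhs : h s ≠ 0)
    (htop : ∀ j, s < j → h j = 0) :
    ∃! ab : Polynomial ℤ × Polynomial ℤ,
      (∀ j, d < j → ab.1.coeff j = 0) ∧
      (∀ j, s - 1 < j → ab.2.coeff j = 0) ∧
      (∀ j ≤ d, ab.1.coeff j = ab.1.coeff (d - j)) ∧
      (∀ j ≤ s - 1, ab.2.coeff j = ab.2.coeff (s - 1 - j)) ∧
      (∑ i ∈ Finset.range (d + 1 - s), (Polynomial.X : Polynomial ℤ) ^ i) *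
          (∑ j ∈ Finset.range (d + 1), Polynomial.C (h j) * Polynomial.X ^ j) =
        ab.1 + Polynomial.X ^ (d + 1 - s) * ab.2 ∧
      (∀ j ≤ d, ab.1.coeff j =
        (∑ i ∈ Finset.range (j + 1), h i) - ∑ i ∈ Finset.range j, h (d - i)) ∧
      (∀ j ≤ s - 1, ab.2.coeff j =
        -(∑ i ∈ Finset.range (j + 1), h i) + ∑ i ∈ Finset.range (j + 1), h (s - i)) :=
  stmt0_general d s hsd h htop
end

section
/- Let h*_0, ..., h*_d be integers and define, for 2 ≤ j ≤ ⌊d/2⌋, a_1 = h*_1 + h*_0 − h*_d, a_j = (h*_0 + ... + h*_j) − (h*_d + ... + h*_{d-j+1}), c_1 = h*_1 + h*_0, and c_j = (h*_0 + ... + h*_j) − (h*_d + ... + h*_{d-j+2}). If a_1 ≤ a_j and c_1 ≤ c_j for all 2 ≤ j ≤ ⌊d/2⌋, then for all 1 ≤ j ≤ ⌊d/2⌋ − 1: (i) h*_{d-1} + h*_{d-2} + ... + h*_{d-j} ≤ h*_2 + h*_3 + ... + h*_{j+1}, and (ii) h*_d + h*_{d-1} + ... + h*_{d-j+1} ≤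 h*_2 + h*_3 + ... + h*_{j+1}. -/
open Finset

theorem Finset.sum_range_add_two_eq {M : Type*} [AddCommMonoid M] (f : ℕ → M) (n : ℕ) :
    ∑ i ∈ range (n + 2), f i = f 0 + f 1 + ∑ i ∈ range n, f (2 + i) := by
  rw [add_comm n, sum_range_add, sum_range_succ, sum_range_one]

theorem Finset.sum_range_succ_sub_eq {M : Type*} [AddCommMonoid M] (f : ℕ → M) (d n : ℕ) :
    ∑ i ∈ range (n + 1), f (d - i) = f d + ∑ i ∈ range n, f (d - 1 - i) := by
  simp only [add_comm n, sum_range_add, sum_range_one, Nat.sub_zero, Nat.sub_sub]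

/-- Corollary 2 deduction: partial-sum inequalities among `h*`-coefficients from
the inequalities `a₁ ≤ a_j` and `c₁ ≤ c_j`. -/
theorem stmt2 (d : ℕ) (h : ℕ → ℤ)
    (ha : ∀ j, 2 ≤ j → j ≤ d / 2 →
      h 1 + h 0 - h d ≤
        (∑ i ∈ Finset.range (j + 1), h i) - ∑ i ∈ Finset.range j, h (d - i))
    (hc : ∀ j, 2 ≤ j → j ≤ d / 2 →
      h 1 + h 0 ≤
        (∑ i ∈ Finset.range (j + 1), h i) - ∑ i ∈ Finset.range (j - 1), h (d - i)) :
    ∀ j, 1 ≤ j → j ≤ d / 2 - 1 →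
      (∑ i ∈ Finset.range j, h (d - 1 - i) ≤ ∑ i ∈ Finset.range j, h (2 + i)) ∧
      (∑ i ∈ Finset.range j, h (d - i) ≤ ∑ i ∈ Finset.range j, h (2 + i)) := by
  intro j hj hjd
  have ha' := ha (j + 1) (by omega) (by omega)
  have hc' := hc (j + 1) (by omega) (by omega)
  rw [sum_range_add_two_eq, sum_range_succ_sub_eq] at ha'
  rw [sum_range_add_two_eq, Nat.add_sub_cancel] at hc'
  constructor <;> linarith
end

section
/- Let G be a finite graph on d vertices and let A(G) be the set of acyclic orientations of G, each regarded as a poset on the vertex set (via the transitive closure of the orientation). Then for every nonnegative integer n, the chromatic polynomial satisfies χ_G(n) = Σ_{Π ∈ A(G)} Ω°_Π(n), where Ω°_Π(n) is the number of strictly order-preserving maps from the poset Π to {1,...,n}. -/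
private lemma transGen_lt {V : Type*} {n : ℕ} {G : SimpleGraph V} (f : V → Fin n) {u v : V}
    (h : Relation.TransGen (fun a b => G.Adj a b ∧ f a < f b) u v) : f u < f v := by
  induction h with
  | single h => exact h.2
  | tail _ h ih => exact ih.trans h.2

/-- Stanley's decomposition of the chromatic polynomial into strict order polynomials of
the acyclic orientations of the graph. -/
theorem stmt6 {V : Type*} [Fintype V] (G : SimpleGraph V) (n : ℕ) :
    Nat.card {f : V → Fin n // ∀ v w, G.Adj v w → f v ≠ f w} =
      Nat.card ((o : {o : V → V → Prop //
          (∀ u v, o u v → G.Adj u v) ∧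
          (∀ u v, G.Adj u v → (o u v ∨ o v u)) ∧
          (∀ u v, o u v → ¬ o v u) ∧
          (∀ v, ¬ Relation.TransGen o v v)}) ×
        {φ : V → Fin n // ∀ u v, Relation.TransGen o.1 u v → φ u < φ v}) := by
  apply Nat.card_congr
  refine
    { toFun := fun f =>
        ⟨⟨fun u v => G.Adj u v ∧ f.1 u < f.1 v,
          fun u v h => h.1,
          fun u v h => ?_,
          fun u v h h' => absurd h'.2 (not_lt.2 h.2.le),
          fun v h => lt_irrefl _ (transGen_lt f.1 h)⟩,
         ⟨f.1, fun u v h => transGen_lt f.1 h⟩⟩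
      invFun := fun p =>
        ⟨p.2.1, fun v w hvw hne => ?_⟩
      left_inv := fun f => rfl
      right_inv := fun p => ?_ }
  · rcases lt_or_ge (f.1 u) (f.1 v) with hlt | hle
    · exact Or.inl ⟨h, hlt⟩
    · exact Or.inr ⟨h.symm, lt_of_le_of_ne hle fun e => f.2 v u h.symm e⟩
  · obtain ⟨⟨o, ho1, ho2, ho3, ho4⟩, ⟨φ, hφ⟩⟩ := p
    rcases ho2 v w hvw with h | h
    · exact absurd hne (hφ v w (Relation.TransGen.single h)).ne
    · exact absurd hne.symm (hφ w v (Relation.TransGen.single h)).ne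
  · obtain ⟨⟨o, ho1, ho2, ho3, ho4⟩, ⟨φ, hφ⟩⟩ := p
    have ho : (fun u v => G.Adj u v ∧ φ u < φ v) = o := by
      funext u v
      apply propext
      constructor
      · rintro ⟨hadj, hlt⟩
        rcases ho2 u v hadj with h | h
        · exact h
        · exact absurd hlt (not_lt.2 (hφ v u (Relation.TransGen.single h)).le)
      · exact fun h => ⟨ho1 u v h, hφ u v (Relation.TransGen.single h)⟩
    subst ho
    rfl
end

section
/- Let Ω*_0, ..., Ω*_d be integers, and suppose there exist integer sequences (a_0,...,a_d) and (b_0,...,b_{d-1}) with a_j = a_{d-j}, b_j = b_{d-1-j}, Ω*_j = a_j − b_j (setting b_d = 0), 1 = a_0 ≤ a_1 ≤ a_j for 1 ≤ j ≤ d−1, and 1 = b_0 ≤ b_1 ≤ b_j for 1 ≤ j ≤ d−2. If additionally Ω*_1 = 0, then for all 2 ≤ j ≤ ⌊d/2⌋: Ω*_{d-2} + Ω*_{d-3} + ... + Ω*_{d-j} ≥ Ω*_2 + Ω*_3 + ... + Ω*_j. -/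
/-!
Symmetry of `a` about `d/2` cancels the `a`-parts of `Ω*_{d-2-i}` and `Ω*_{2+i}`, and symmetry
of `b` about `(d-1)/2` turns `b_{d-2-i}` into `b_{1+i}`. Hence the difference of the two partial
sums telescopes to `b_j - b_1`, which is nonnegative.
-/

open Finset

section SymmetricDecomposition

variable {d : ℕ} {Ω a b : ℕ → ℤ}

theorem reflected_sub_eq_sub_succ (hΩ : ∀ j ≤ d, Ω j = a j - b j)
    (hasym : ∀ j ≤ d, a j = a (d - j)) (hbsym : ∀ j ≤ d - 1, b j = b (d - 1 - j))
    {i : ℕ} (hi : 2 + i ≤ d) :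
    Ω (d - 2 - i) - Ω (2 + i) = b (2 + i) - b (1 + i) := by
  have ha : a (2 + i) = a (d - 2 - i) := by rw [hasym _ hi]; congr 1; omega
  have hb : b (1 + i) = b (d - 2 - i) := by rw [hbsym _ (by omega)]; congr 1; omega
  rw [hΩ _ hi, hΩ _ (by omega)]
  linarith

theorem sum_reflected_sub_eq (hΩ : ∀ j ≤ d, Ω j = a j - b j)
    (hasym : ∀ j ≤ d, a j = a (d - j)) (hbsym : ∀ j ≤ d - 1, b j = b (d - 1 - j))
    {j : ℕ} (hj1 : 1 ≤ j) (hjd : j ≤ d) :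
    ∑ i ∈ range (j - 1), Ω (d - 2 - i) - ∑ i ∈ range (j - 1), Ω (2 + i) = b j - b 1 := by
  calc ∑ i ∈ range (j - 1), Ω (d - 2 - i) - ∑ i ∈ range (j - 1), Ω (2 + i)
      = ∑ i ∈ range (j - 1), (b (1 + (i + 1)) - b (1 + i)) := by
        rw [← sum_sub_distrib]
        refine sum_congr rfl fun i hi => ?_
        rw [reflected_sub_eq_sub_succ hΩ hasym hbsym (by simp at hi; omega)]
        ring_nf
    _ = b j - b 1 := by
        rw [sum_range_sub (fun i => b (1 + i))]
        congr 2; omega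

end SymmetricDecomposition

theorem stmt9_general (d : ℕ) (Ω a b : ℕ → ℤ)
    (hΩ : ∀ j ≤ d, Ω j = a j - b j)
    (hasym : ∀ j ≤ d, a j = a (d - j))
    (hbsym : ∀ j ≤ d - 1, b j = b (d - 1 - j))
    (hb1 : ∀ j, 1 ≤ j → j ≤ d - 2 → b 1 ≤ b j) :
    ∀ j, 2 ≤ j → j ≤ d / 2 →
      ∑ i ∈ Finset.range (j - 1), Ω (2 + i) ≤
        ∑ i ∈ Finset.range (j - 1), Ω (d - 2 - i) := by
  intro j hj2 hjd
  have hsum := sum_reflected_sub_eq hΩ hasym hbsym (j := j) (by omega) (by omega)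
  have hb1j := hb1 j (by omega) (by omega)
  linarith

/-- Corollary 4 deduction: partial-sum inequalities for the coefficients `Ω*` from the
symmetric decomposition `Ω* = a - b`. -/
theorem stmt9 (d : ℕ) (Ω a b : ℕ → ℤ)
    (hbd : b d = 0)
    (hΩ : ∀ j ≤ d, Ω j = a j - b j)
    (hasym : ∀ j ≤ d, a j = a (d - j))
    (hbsym : ∀ j ≤ d - 1, b j = b (d - 1 - j))
    (ha0 : a 0 = 1) (ha01 : a 0 ≤ a 1)
    (ha1 : ∀ j, 1 ≤ j → j ≤ d - 1 → a 1 ≤ a j)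
    (hb0 : b 0 = 1) (hb01 : b 0 ≤ b 1)
    (hb1 : ∀ j, 1 ≤ j → j ≤ d - 2 → b 1 ≤ b j)
    (hΩ1 : Ω 1 = 0) :
    ∀ j, 2 ≤ j → j ≤ d / 2 →
      ∑ i ∈ Finset.range (j - 1), Ω (2 + i) ≤
        ∑ i ∈ Finset.range (j - 1), Ω (d - 2 - i) :=
  stmt9_general d Ω a b hΩ hasym hbsym hb1
end

section
/- Let ξ ≥ 1 and let φ*_1, ..., φ*_ξ be integers (with φ*_0 = 0). Suppose there exist integer sequences (α_0,...,α_{ξ+1}) and (β_0,...,β_ξ) with α_j = α_{ξ+1-j}, β_j = β_{ξ-j}, φ*_j = α_j − β_j for 0 ≤ j ≤ ξ+1 (setting φ*_{ξ+1} = 0, β_{ξ+1} = 0), α_0 ≤ α_1 ≤ α_j for 1 ≤ j ≤ ξ, and β_0 ≤ β_1 ≤ β_j for 1 ≤ j ≤ ξ−1. Then for all 1 ≤ j ≤ ⌊(ξ−1)/2⌋: (i) φ*_{ξ-1} + ... + φ*_{ξ-j} ≥ φ*_1 + ... + φ*_j, and (ii) φ*_{ξ-1} + ... + φ*_{ξ-j}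 ≥ φ*_2 + ... + φ*_{j+1}. -/
open Finset

/-! Reflecting `φ (ξ - 1 - i) = α (ξ - 1 - i) - β (ξ - 1 - i)` through the two symmetries gives
`α (2 + i) - β (1 + i)`. Hence the right-hand sum exceeds the left-hand sum of (i) by the
telescoping sum `α (1 + j) - α 1`, and that of (ii) by `β (1 + j) - β 1`; both are
nonnegative by the minimality of `α 1` and `β 1`. -/

theorem sum_range_shift_le_sum_range_shift_succ {G : Type*} [AddCommGroup G] [PartialOrder G]
    [IsOrderedAddMonoid G] (f : ℕ → G) (n : ℕ) (h : f 1 ≤ f (1 + n)) :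
    ∑ i ∈ range n, f (1 + i) ≤ ∑ i ∈ range n, f (2 + i) := by
  have htel : ∑ i ∈ range n, (f (2 + i) - f (1 + i)) = f (1 + n) - f 1 := by
    simpa only [show ∀ i, 1 + (i + 1) = 2 + i by omega, add_zero] using
      sum_range_sub (fun i => f (1 + i)) n
  rw [← sub_nonneg, ← sum_sub_distrib, htel, sub_nonneg]
  exact h

theorem apply_sub_one_sub_eq_of_symm {G : Type*} [AddGroup G] {ξ i : ℕ} {φ α β : ℕ → G}
    (hαsym : ∀ j ≤ ξ + 1, α j = α (ξ + 1 - j)) (hβsym : ∀ j ≤ ξ, β j = β (ξ - j))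
    (hφ : ∀ j ≤ ξ + 1, φ j = α j - β j) (hi : i + 2 ≤ ξ) :
    φ (ξ - 1 - i) = α (2 + i) - β (1 + i) := by
  rw [hφ _ (by omega), hαsym _ (by omega), hβsym _ (by omega),
    show ξ + 1 - (ξ - 1 - i) = 2 + i by omega, show ξ - (ξ - 1 - i) = 1 + i by omega]

theorem stmt15_general (ξ : ℕ) (φ α β : ℕ → ℤ)
    (hαsym : ∀ j ≤ ξ + 1, α j = α (ξ + 1 - j))
    (hβsym : ∀ j ≤ ξ, β j = β (ξ - j))
    (hφ : ∀ j ≤ ξ + 1, φ j = α j - β j)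
    (hα1 : ∀ j, 1 ≤ j → j ≤ ξ → α 1 ≤ α j)
    (hβ1 : ∀ j, 1 ≤ j → j ≤ ξ - 1 → β 1 ≤ β j) :
    ∀ j, 1 ≤ j → j ≤ (ξ - 1) / 2 →
      (∑ i ∈ Finset.range j, φ (1 + i) ≤ ∑ i ∈ Finset.range j, φ (ξ - 1 - i)) ∧
      (∑ i ∈ Finset.range j, φ (2 + i) ≤ ∑ i ∈ Finset.range j, φ (ξ - 1 - i)) := by
  intro j hj hjξ
  have hφ_reflect : ∑ i ∈ range j, φ (ξ - 1 - i) = ∑ i ∈ range j, (α (2 + i) - β (1 + i)) :=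
    sum_congr rfl fun i hi =>
      apply_sub_one_sub_eq_of_symm hαsym hβsym hφ (by have := mem_range.1 hi; omega)
  have hφ_shift (k : ℕ) (hk : k ≤ 2) :
      ∑ i ∈ range j, φ (k + i) = ∑ i ∈ range j, (α (k + i) - β (k + i)) :=
    sum_congr rfl fun i hi => hφ _ (by have := mem_range.1 hi; omega)
  have hα := sum_range_shift_le_sum_range_shift_succ α j (hα1 _ (by omega) (by omega))
  have hβ := sum_range_shift_le_sum_range_shift_succ β j (hβ1 _ (by omega) (by omega))
  rw [hφ_reflect, hφ_shift 1 (by omega), hφ_shift 2 (by omega)]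
  simp only [sum_sub_distrib]
  constructor <;> linarith

/-- Corollary 3 deduction: partial-sum inequalities for flow-polynomial coefficients from a
symmetric decomposition `φ* = α - β`. -/
theorem stmt15 (ξ : ℕ) (hξ : 1 ≤ ξ) (φ α β : ℕ → ℤ)
    (hφ0 : φ 0 = 0) (hφtop : φ (ξ + 1) = 0) (hβtop : β (ξ + 1) = 0)
    (hαsym : ∀ j ≤ ξ + 1, α j = α (ξ + 1 - j))
    (hβsym : ∀ j ≤ ξ, β j = β (ξ - j))
    (hφ : ∀ j ≤ ξ + 1, φ j = α j - β j)
    (hα01 : α 0 ≤ α 1) (hα1 : ∀ j, 1 ≤ j → j ≤ ξ → α 1 ≤ α j)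
    (hβ01 : β 0 ≤ β 1) (hβ1 : ∀ j, 1 ≤ j → j ≤ ξ - 1 → β 1 ≤ β j) :
    ∀ j, 1 ≤ j → j ≤ (ξ - 1) / 2 →
      (∑ i ∈ Finset.range j, φ (1 + i) ≤ ∑ i ∈ Finset.range j, φ (ξ - 1 - i)) ∧
      (∑ i ∈ Finset.range j, φ (2 + i) ≤ ∑ i ∈ Finset.range j, φ (ξ - 1 - i)) :=
  stmt15_general ξ φ α β hαsym hβsym hφ hα1 hβ1
end

section
/- For every finite graph G on d vertices, the binomial transform coefficients χ*_0, ..., χ*_d of the chromatic polynomial (defined by Σ_{n≥0} χ_G(n) z^n = (Σ_j χ*_j z^j)/(1−z)^{d+1}) satisfy χ*_j ≥ 0 for all j, χ*_0 = 0 if d ≥ 1, and χ*_d equals the number of acyclic orientations of G. -/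
/-!
Orienting every edge of a proper colouring towards the larger colour gives an acyclic
orientation `o`, so `χ_G(n)` is the sum over `o` of the number of colourings strictly increasing
along `o`. Label the vertices so that labels decrease along arcs and sort such a colouring by
(colour, label): the sorting permutation `σ` is a linear extension of `o`, and the sorted colour
sequence is weakly increasing, strictly at the descents of `σ`. Adding to each entry the number
of earlier ascents of `σ` makes it strictly increasing with values below `n + asc σ`, so
`χ_G(n) = ∑_{(o, σ)} C(n + asc σ, d)`. As `∑ₙ C(n + a, d) zⁿ (1 - z)^(d+1) = z^(d-a)`,
`χ*_j` counts the pairs with `asc σ = d - j`. The last position is never an ascent, so `χ*_0 = 0` for `d ≥ 1`;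
and only the reversal has no ascent, which is a linear extension of every `o`, so `χ*_d` is the
number of acyclic orientations.
-/

open Finset PowerSeries

theorem PowerSeries.mk_choose_add_mul_one_sub_pow {R : Type*} [CommRing R] {a d : ℕ}
    (h : a ≤ d) : (mk fun n => ((n + a).choose d : R)) * (1 - X) ^ (d + 1) = X ^ (d - a) := by
  have hshift : (mk fun n => ((n + a).choose d : R)) =
      X ^ (d - a) * mk fun n => ((d + n).choose d : R) := by
    ext n
    rw [coeff_X_pow_mul', coeff_mk, coeff_mk]
    split_ifs with hn
    · congr 2; omega
    · rw [Nat.choose_eq_zero_of_lt (by omega), Nat.cast_zero]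
  rw [hshift, mul_assoc, mk_add_choose_mul_one_sub_pow_eq_one, mul_one]

lemma Fin.strictMono_intCast_val_iff {d N : ℕ} (h : Fin d → Fin N) :
    StrictMono h ↔ StrictMono fun i => ((h i : ℕ) : ℤ) := by
  simp only [StrictMono, Fin.lt_def, Nat.cast_lt]

theorem exists_equiv_fin_lt_of_acyclic {V : Type*} [Fintype V] (r : V → V → Prop)
    (hr : ∀ v, ¬ Relation.TransGen r v v) :
    ∃ ℓ : V ≃ Fin (Fintype.card V), ∀ u v, r u v → ℓ u < ℓ v := by
  let _ : PartialOrder V :=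
    { le := Relation.ReflTransGen r
      le_refl _ := .refl
      le_trans _ _ _ := .trans
      le_antisymm u v huv hvu := by
        rcases Relation.reflTransGen_iff_eq_or_transGen.1 huv with h | huv
        · exact h.symm
        rcases Relation.reflTransGen_iff_eq_or_transGen.1 hvu with h | hvu
        · exact h
        exact (hr u (huv.trans hvu)).elim }
  let _ : Fintype (LinearExtension V) := ‹Fintype V›
  let e := (Fintype.orderIsoFinOfCardEq (LinearExtension V) rfl).symm
  refine ⟨e.toEquiv, fun u v huv => ?_⟩
  have hle : toLinearExtension u ≤ toLinearExtension v :=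
    toLinearExtension.monotone (Relation.ReflTransGen.single huv)
  refine lt_of_le_of_ne (e.monotone hle) fun h => hr u ?_
  rw [show u = v from e.injective h] at huv ⊢
  exact .single huv

namespace Tuple

section Ascents

variable {α : Type*} [Preorder α] {d : ℕ}

lemma strictMono_toLex_intCast_val_iff {n : ℕ} (s : Fin d → α) (g : Fin d → Fin n) :
    StrictMono (fun i => toLex (g i, s i)) ↔
      StrictMono fun i => toLex (((g i : ℕ) : ℤ), s i) := by
  simp only [StrictMono, Prod.Lex.toLex_lt_toLex, Fin.lt_def, Fin.ext_iff, Nat.cast_lt,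
    Nat.cast_inj]

variable [DecidableLT α]

def ascents (s : Fin d → α) : Finset (Fin d) :=
  {i | ∃ j : Fin d, (j : ℕ) = i + 1 ∧ s i < s j}

def ascentsBelow (s : Fin d → α) (i : Fin d) : ℕ :=
  #{k ∈ ascents s | k < i}

lemma castSucc_mem_ascents {m : ℕ} (s : Fin (m + 1) → α) (i : Fin m) :
    i.castSucc ∈ ascents s ↔ s i.castSucc < s i.succ := by
  simp only [ascents, mem_filter, mem_univ, true_and]
  constructor
  · rintro ⟨j, hj, hlt⟩
    rwa [show j = i.succ from Fin.ext (by simpa using hj)] at hlt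
  · exact fun h => ⟨i.succ, by simp, h⟩

lemma last_notMem_ascents {m : ℕ} (s : Fin (m + 1) → α) : Fin.last m ∉ ascents s := by
  simp only [ascents, mem_filter, mem_univ, true_and, not_exists, not_and]
  intro j hj
  have := j.isLt
  simp only [Fin.val_last] at hj
  omega

lemma card_ascents_le (s : Fin d → α) : #(ascents s) ≤ d := by
  simpa using card_le_univ (ascents s)

lemma card_ascents_lt (s : Fin d → α) (hd : 0 < d) : #(ascents s) < d := by
  obtain ⟨m, rfl⟩ := Nat.exists_eq_add_one.2 hd
  simpa using card_lt_univ_of_notMem (last_notMem_ascents s)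

lemma ascentsBelow_le (s : Fin d → α) (i : Fin d) : ascentsBelow s i ≤ #(ascents s) :=
  card_filter_le _ _

lemma ascentsBelow_zero {m : ℕ} (s : Fin (m + 1) → α) : ascentsBelow s 0 = 0 := by
  simp [ascentsBelow]

lemma ascentsBelow_last {m : ℕ} (s : Fin (m + 1) → α) :
    ascentsBelow s (Fin.last m) = #(ascents s) := by
  rw [ascentsBelow, filter_true_of_mem]
  intro k hk
  exact lt_of_le_of_ne (Fin.le_last k) (by rintro rfl; exact last_notMem_ascents s hk)

lemma ascentsBelow_succ {m : ℕ} (s : Fin (m + 1) → α) (i : Fin m) :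
    ascentsBelow s i.succ =
      ascentsBelow s i.castSucc + if s i.castSucc < s i.succ then 1 else 0 := by
  have hsplit : {k ∈ ascents s | k < i.succ} =
      {k ∈ ascents s | k < i.castSucc} ∪ {k ∈ ascents s | k = i.castSucc} := by
    ext k
    have : k < i.succ ↔ k < i.castSucc ∨ k = i.castSucc := by
      simp only [Fin.lt_def, Fin.ext_iff, Fin.val_succ, Fin.val_castSucc]; omega
    simp only [mem_filter, mem_union, this, and_or_left]
  rw [ascentsBelow, ascentsBelow, hsplit, card_union_of_disjoint, filter_eq']
  · by_cases h : s i.castSucc < s i.succ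
    · simp [h, (castSucc_mem_ascents s i).2 h]
    · simp [h, mt (castSucc_mem_ascents s i).1 h]
  · exact disjoint_filter.2 fun k _ h => h.ne

/-- Shifting by `ascentsBelow s` turns the weak steps of `g` (allowed exactly at the ascents
of `s`) into strict ones. -/
theorem strictMono_toLex_iff_strictMono_add_ascentsBelow (s : Fin d → α) (g : Fin d → ℤ) :
    StrictMono (fun i => toLex (g i, s i)) ↔ StrictMono fun i => g i + ascentsBelow s i := by
  cases d with
  | zero => exact ⟨fun _ i => i.elim0, fun _ i => i.elim0⟩
  | succ m =>
    simp only [Fin.strictMono_iff_lt_succ, Prod.Lex.toLex_lt_toLex, ascentsBelow_succ]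
    refine forall_congr' fun i => ?_
    split_ifs with h <;> simp only [h, and_true, and_false, or_false] <;> omega

lemma monotone_sub_ascentsBelow (s : Fin d → α) {h : Fin d → ℤ} (hh : StrictMono h) :
    Monotone fun i => h i - ascentsBelow s i := by
  have := (strictMono_toLex_iff_strictMono_add_ascentsBelow s
    fun i => h i - ascentsBelow s i).2 (by simpa using hh)
  exact Prod.Lex.monotone_fst_ofLex.comp this.monotone

lemma ascentsBelow_le_and_sub_lt (s : Fin d → α) {n : ℕ}
    (h : Fin d ↪o Fin (n + #(ascents s))) (i : Fin d) :
    ascentsBelow s i ≤ h i ∧ h i - ascentsBelow s i < n := by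
  obtain ⟨m, rfl⟩ := Nat.exists_eq_add_one.2 (Fin.pos i)
  have hmono := monotone_sub_ascentsBelow s ((Fin.strictMono_intCast_val_iff h).1 h.strictMono)
  have hfirst := hmono (Fin.zero_le i)
  have hlast := hmono (Fin.le_last i)
  have hlt := (h (Fin.last m)).isLt
  simp only [ascentsBelow_zero, ascentsBelow_last] at hfirst hlast
  omega

def strictMonoToLexEquiv (s : Fin d → α) (n : ℕ) :
    {g : Fin d → Fin n // StrictMono fun i => toLex (g i, s i)} ≃
      (Fin d ↪o Fin (n + #(ascents s))) where
  toFun g := OrderEmbedding.ofStrictMono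
    (fun i => ⟨g.1 i + ascentsBelow s i, by have := ascentsBelow_le s i; omega⟩) <| by
      rw [Fin.strictMono_intCast_val_iff]
      exact_mod_cast (strictMono_toLex_iff_strictMono_add_ascentsBelow s _).1
        ((strictMono_toLex_intCast_val_iff s g.1).1 g.2)
  invFun h := ⟨fun i => ⟨h i - ascentsBelow s i, (ascentsBelow_le_and_sub_lt s h i).2⟩, by
    rw [strictMono_toLex_intCast_val_iff, strictMono_toLex_iff_strictMono_add_ascentsBelow]
    convert (Fin.strictMono_intCast_val_iff h).1 h.strictMono using 2 with i
    push_cast [(ascentsBelow_le_and_sub_lt s h i).1]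
    ring⟩
  left_inv g := by ext; simp
  right_inv h := by
    ext i
    simp [(ascentsBelow_le_and_sub_lt s h i).1]

theorem card_strictMono_toLex (s : Fin d → α) (n : ℕ) :
    Nat.card {g : Fin d → Fin n // StrictMono fun i => toLex (g i, s i)} =
      (n + #(ascents s)).choose d := by
  rw [Nat.card_congr ((strictMonoToLexEquiv s n).trans Set.powersetCard.ofFinEmbEquiv),
    Set.powersetCard.card, Nat.card_fin]

lemma ascents_revPerm : ascents (Fin.revPerm : Equiv.Perm (Fin d)) = ∅ := by
  ext i
  simp only [ascents, Fin.revPerm_apply, Fin.rev_lt_rev, mem_filter, mem_univ, true_and,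
    notMem_empty, iff_false, not_exists, not_and]
  intro j hj
  simp only [Fin.lt_def]
  omega

lemma eq_revPerm_of_ascents_eq_empty {σ : Equiv.Perm (Fin d)} (h : ascents σ = ∅) :
    σ = Fin.revPerm := by
  cases d with
  | zero => exact Subsingleton.elim _ _
  | succ m =>
    have hanti : StrictAnti σ := Fin.strictAnti_iff_succ_lt.2 fun i =>
      lt_of_le_of_ne (not_lt.1 fun hlt => by simpa [h] using (castSucc_mem_ascents σ i).2 hlt)
        (σ.injective.ne Fin.castSucc_lt_succ.ne')
    have hid := (hanti.comp Fin.rev_strictAnti).eq_id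
    ext i : 1
    simpa using congrFun hid (Fin.rev i)

end Ascents

section LinearExtension

variable {α : Type*} [LinearOrder α] {d : ℕ}

def IsLinearExtension (R : Fin d → Fin d → Prop) (σ : Equiv.Perm (Fin d)) : Prop :=
  ∀ i j, R (σ i) (σ j) → i < j

lemma isLinearExtension_revPerm {R : Fin d → Fin d → Prop} (hR : ∀ a b, R a b → b < a) :
    IsLinearExtension R Fin.revPerm := fun _ _ h => Fin.rev_lt_rev.1 (hR _ _ h)

lemma eq_sort_iff_strictMono_toLex {f : Fin d → α} {σ : Equiv.Perm (Fin d)} :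
    σ = sort f ↔ StrictMono fun i => toLex (f (σ i), σ i) :=
  eq_sort_iff'

lemma isLinearExtension_sort {R : Fin d → Fin d → Prop} {c : Fin d → α}
    (hc : ∀ a b, R a b → c a < c b) : IsLinearExtension R (sort c) := fun _ _ hij =>
  (eq_sort_iff_strictMono_toLex.1 rfl).lt_iff_lt.1
    (Prod.Lex.toLex_lt_toLex.2 (.inl (hc _ _ hij)))

/-- Ties of `g` can only occur along increasing labels, while `R` decreases labels. -/
lemma lt_of_strictMono_toLex {R : Fin d → Fin d → Prop} (hR : ∀ a b, R a b → b < a)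
    {σ : Equiv.Perm (Fin d)} (hσ : IsLinearExtension R σ) {g : Fin d → α}
    (hg : StrictMono fun i => toLex (g i, σ i)) {a b : Fin d} (hab : R a b) :
    g (σ.symm a) < g (σ.symm b) := by
  have hlt := hg (hσ (σ.symm a) (σ.symm b) (by simpa using hab))
  simp only [Equiv.apply_symm_apply, Prod.Lex.toLex_lt_toLex] at hlt
  exact hlt.resolve_right fun h => (hR a b hab).not_gt h.2

/-- Stanley's fundamental lemma on `(P, ω)`-partitions, for a labeling `ω` reversing `P`. -/
def strictHomEquivSigma (R : Fin d → Fin d → Prop) (hR : ∀ a b, R a b → b < a) :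
    {c : Fin d → α // ∀ a b, R a b → c a < c b} ≃
      Σ σ : {σ : Equiv.Perm (Fin d) // IsLinearExtension R σ},
        {g : Fin d → α // StrictMono fun i => toLex (g i, σ.1 i)} :=
  (Equiv.sigmaFiberEquiv fun c => ⟨sort c.1, isLinearExtension_sort c.2⟩).symm.trans <|
    Equiv.sigmaCongrRight fun σ =>
    { toFun c :=
        ⟨c.1.1 ∘ σ.1, eq_sort_iff_strictMono_toLex.1 (congrArg Subtype.val c.2).symm⟩
      invFun g := ⟨⟨g.1 ∘ σ.1.symm, fun a b hab => lt_of_strictMono_toLex hR σ.2 g.2 hab⟩,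
        Subtype.ext (eq_sort_iff_strictMono_toLex.2 (by simpa using g.2)).symm⟩
      left_inv c := by ext; simp
      right_inv g := by ext; simp }

open Classical in
lemma card_isLinearExtension_ascents_eq_empty {R : Fin d → Fin d → Prop}
    (hR : ∀ a b, R a b → b < a) :
    #{σ : {σ : Equiv.Perm (Fin d) // IsLinearExtension R σ} | ascents ⇑σ.1 = ∅} = 1 := by
  refine card_eq_one.2 ⟨⟨Fin.revPerm, isLinearExtension_revPerm hR⟩, ?_⟩
  ext σ
  simp only [mem_filter, mem_univ, true_and, mem_singleton, Subtype.ext_iff]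
  exact ⟨eq_revPerm_of_ascents_eq_empty, fun h => h ▸ ascents_revPerm⟩

end LinearExtension

end Tuple

open Tuple

namespace SimpleGraph

variable {V : Type*} (G : SimpleGraph V)

def AcyclicOrientation : Type _ :=
  {o : V → V → Prop //
    (∀ u v, o u v → G.Adj u v) ∧
    (∀ u v, G.Adj u v → (o u v ∨ o v u)) ∧
    (∀ u v, o u v → ¬ o v u) ∧
    (∀ v, ¬ Relation.TransGen o v v)}

noncomputable instance [Fintype V] : Fintype G.AcyclicOrientation :=
  @Fintype.ofFinite _ Subtype.finite

variable {G}

namespace AcyclicOrientation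

def ofColoring {β : Type*} [LinearOrder β] (f : V → β)
    (hf : ∀ v w, G.Adj v w → f v ≠ f w) : G.AcyclicOrientation :=
  ⟨fun u v => G.Adj u v ∧ f u < f v, fun _ _ h => h.1,
    fun u v huv => (hf u v huv).lt_or_gt.imp (⟨huv, ·⟩) (⟨huv.symm, ·⟩),
    fun _ _ huv hvu => huv.2.not_gt hvu.2,
    fun v hv => lt_irrefl (f v) <| by
      simpa only [Relation.transGen_eq_self] using
        Relation.TransGen.lift f (p := (· < ·)) (fun _ _ h => h.2) v v hv⟩

lemma ofColoring_eq {β : Type*} [LinearOrder β] (o : G.AcyclicOrientation) {f : V → β}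
    (hf : ∀ u v, o.1 u v → f u < f v) (hf' : ∀ v w, G.Adj v w → f v ≠ f w) :
    ofColoring f hf' = o := by
  refine Subtype.ext <| funext₂ fun u v =>
    propext ⟨fun ⟨huv, hlt⟩ => ?_, fun h => ⟨o.2.1 u v h, hf u v h⟩⟩
  exact (o.2.2.1 u v huv).resolve_right fun h => (hf v u h).not_gt hlt

variable [Fintype V]

/-- Labels decrease along arcs: `Tuple.sort` breaks ties of colours by increasing label, so the
endpoints of an arc can never tie. -/
noncomputable def labeling (o : G.AcyclicOrientation) : V ≃ Fin (Fintype.card V) :=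
  (exists_equiv_fin_lt_of_acyclic o.1 o.2.2.2.2).choose.trans Fin.revPerm

lemma labeling_lt_labeling (o : G.AcyclicOrientation) {u v : V} (h : o.1 u v) :
    o.labeling v < o.labeling u :=
  Fin.rev_lt_rev.2 ((exists_equiv_fin_lt_of_acyclic o.1 o.2.2.2.2).choose_spec u v h)

def relabel (o : G.AcyclicOrientation) (a b : Fin (Fintype.card V)) : Prop :=
  o.1 (o.labeling.symm a) (o.labeling.symm b)

lemma relabel_lt {o : G.AcyclicOrientation} {a b : Fin (Fintype.card V)} (h : o.relabel a b) :
    b < a := by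
  simpa using o.labeling_lt_labeling h

end AcyclicOrientation

def properColoringEquivSigma (β : Type*) [LinearOrder β] :
    {f : V → β // ∀ v w, G.Adj v w → f v ≠ f w} ≃
      Σ o : G.AcyclicOrientation, {f : V → β // ∀ u v, o.1 u v → f u < f v} :=
  (Equiv.sigmaFiberEquiv fun f => AcyclicOrientation.ofColoring f.1 f.2).symm.trans <|
    Equiv.sigmaCongrRight fun o =>
    { toFun f := ⟨f.1.1, fun u v h => by rw [← f.2] at h; exact h.2⟩
      invFun f := ⟨⟨f.1, fun v w hvw => by
          rcases o.2.2.1 v w hvw with h | h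
          exacts [(f.2 v w h).ne, (f.2 w v h).ne']⟩,
        AcyclicOrientation.ofColoring_eq o f.2 _⟩
      left_inv f := rfl
      right_inv f := rfl }

variable [Fintype V]

open Classical in
theorem card_properColorings_eq_sum (n : ℕ) :
    Nat.card {f : V → Fin n // ∀ v w, G.Adj v w → f v ≠ f w} =
      ∑ o : G.AcyclicOrientation, ∑ σ : {σ // IsLinearExtension o.relabel σ},
        (n + #(ascents ⇑σ.1)).choose (Fintype.card V) := by
  rw [Nat.card_congr (G.properColoringEquivSigma (Fin n)), Nat.card_sigma]
  refine sum_congr rfl fun o _ => ?_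
  have hrelabel : ∀ f : V → Fin n, (∀ u v, o.1 u v → f u < f v) ↔
      ∀ a b, o.relabel a b → (o.labeling.arrowCongr (Equiv.refl _) f) a <
        (o.labeling.arrowCongr (Equiv.refl _) f) b :=
    fun f => ⟨fun h a b hab => h _ _ hab,
      fun h u v huv => by
        simpa using h (o.labeling u) (o.labeling v) (by simpa [AcyclicOrientation.relabel])⟩
  rw [Nat.card_congr ((o.labeling.arrowCongr (Equiv.refl _)).subtypeEquiv
      (q := fun c => ∀ a b, o.relabel a b → c a < c b) hrelabel),
    Nat.card_congr (strictHomEquivSigma o.relabel fun _ _ => AcyclicOrientation.relabel_lt),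
    Nat.card_sigma]
  simp_rw [card_strictMono_toLex]

open Classical in
theorem mk_card_properColorings_mul_one_sub_pow :
    (PowerSeries.mk fun n =>
        (Nat.card {f : V → Fin n // ∀ v w, G.Adj v w → f v ≠ f w} : ℤ)) *
        (1 - X) ^ (Fintype.card V + 1) =
      ∑ o : G.AcyclicOrientation, ∑ σ : {σ // IsLinearExtension o.relabel σ},
        X ^ (Fintype.card V - #(ascents ⇑σ.1)) := by
  have hmk : (PowerSeries.mk fun n =>
      (Nat.card {f : V → Fin n // ∀ v w, G.Adj v w → f v ≠ f w} : ℤ)) =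
      ∑ o : G.AcyclicOrientation, ∑ σ : {σ // IsLinearExtension o.relabel σ},
        PowerSeries.mk fun n => ((n + #(ascents ⇑σ.1)).choose (Fintype.card V) : ℤ) := by
    ext n
    simp only [coeff_mk, map_sum, card_properColorings_eq_sum, Nat.cast_sum]
  simp_rw [hmk, sum_mul, mk_choose_add_mul_one_sub_pow (card_ascents_le _)]

end SimpleGraph

/-- Properties of the binomial transform `χ*` of the chromatic polynomial: nonnegativity of
all coefficients, vanishing constant coefficient (for `d ≥ 1`), and top coefficient equal
to the number of acyclic orientations. -/
theorem stmt17 {V : Type*} [Fintype V] (d : ℕ) (hV : Fintype.card V = d)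
    (G : SimpleGraph V) (χs : Polynomial ℤ)
    (hgen : (PowerSeries.mk fun n : ℕ =>
        (Nat.card {f : V → Fin n // ∀ v w, G.Adj v w → f v ≠ f w} : ℤ)) *
        (1 - PowerSeries.X) ^ (d + 1) = (χs : PowerSeries ℤ)) :
    (∀ j, 0 ≤ χs.coeff j) ∧
    (1 ≤ d → χs.coeff 0 = 0) ∧
    χs.coeff d = (Nat.card {o : V → V → Prop //
      (∀ u v, o u v → G.Adj u v) ∧
      (∀ u v, G.Adj u v → (o u v ∨ o v u)) ∧
      (∀ u v, o u v → ¬ o v u) ∧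
      (∀ v, ¬ Relation.TransGen o v v)} : ℤ) := by
  classical
  subst hV
  have hcoeff : ∀ j, χs.coeff j = ∑ o : G.AcyclicOrientation,
      (#{σ : {σ // IsLinearExtension o.relabel σ} |
        Fintype.card V - #(ascents ⇑σ.1) = j} : ℤ) := by
    intro j
    rw [← Polynomial.coeff_coe, ← hgen, G.mk_card_properColorings_mul_one_sub_pow]
    simp [map_sum, coeff_X_pow, eq_comm]
  refine ⟨fun j => hcoeff j ▸ by positivity, fun hd => ?_, ?_⟩
  · rw [hcoeff]
    refine sum_eq_zero fun o _ => ?_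
    rw [Nat.cast_eq_zero, card_eq_zero, filter_eq_empty_iff]
    intro σ _
    have := card_ascents_lt (⇑σ.1) hd
    omega
  · have htop : ∀ o : G.AcyclicOrientation, #{σ : {σ // IsLinearExtension o.relabel σ} |
        Fintype.card V - #(ascents ⇑σ.1) = Fintype.card V} = 1 := fun o => by
      rw [← card_isLinearExtension_ascents_eq_empty (R := o.relabel)
        fun _ _ => SimpleGraph.AcyclicOrientation.relabel_lt]
      refine congrArg card (filter_congr fun σ _ => ?_)
      have := card_ascents_le (⇑σ.1)
      rw [← card_eq_zero]
      omega
    rw [hcoeff]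
    simp only [htop, Nat.cast_one, sum_const, card_univ, nsmul_one]
    rw [← Nat.card_eq_fintype_card]
    rfl
end
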